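/- arXiv:1409.7673 — 2 statements merged into one kernel-verified Lean document; each statement's English description precedes it below -/
import Mathlib

section
/- Let p = 4, λ = √2, U = [[√2,−1],[1,0]], T = [[0,−1],[1,0]], and let k be an odd positive integer. Define q(z) = (z²−√2z−3)^{−k} + (z²+√2z−3)^{−k} + (3z²−√2z−1)^{−k} + (3z²+√2z−1)^{−k}. Then q satisfies the two rational period function relations of weight 2k for the Hecke group G_4: q + q|T = 0 and q + q|U + q|U² + q|U³ = 0, at every z ∈ ℂ where all terms are defined. That is, q is a rational period function of weight 2k on G_4. -/
open Matrix

noncomputable section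

abbrev SL2R := Matrix.SpecialLinearGroup (Fin 2) ℝ

/-- `S = [[1,√2],[0,1]]`, the translation generator of `G₄`. -/
def Smat : SL2R := ⟨!![1, Real.sqrt 2; 0, 1], by norm_num [Matrix.det_fin_two_of]⟩

/-- `T = [[0,-1],[1,0]]`. -/
def Tmat : SL2R := ⟨!![0, -1; 1, 0], by norm_num [Matrix.det_fin_two_of]⟩

/-- `U = S * T = [[√2,-1],[1,0]]`. -/
def Umat : SL2R := Smat * Tmat

/-- Möbius action of a matrix on ℂ. -/
def mobius (M : SL2R) (z : ℂ) : ℂ :=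
  ((M.1 0 0 : ℝ) * z + (M.1 0 1 : ℝ)) / ((M.1 1 0 : ℝ) * z + (M.1 1 1 : ℝ))

/-- The automorphy denominator `cz + d`. -/
def denom (M : SL2R) (z : ℂ) : ℂ := (M.1 1 0 : ℝ) * z + (M.1 1 1 : ℝ)

/-- Weight `2k` slash operator: `(f|M)(z) = (cz+d)^{-2k} f(Mz)`. -/
def slash (k : ℕ) (M : SL2R) (f : ℂ → ℂ) (z : ℂ) : ℂ :=
  (denom M z) ^ (-(2 * (k : ℤ))) * f (mobius M z)

/-- `√2` as a complex number. -/
def sq2 : ℂ := (Real.sqrt 2 : ℝ)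

/-- All four quadratics of the example are nonvanishing at `w`. -/
def QuadsNonzero (w : ℂ) : Prop :=
  w ^ 2 - sq2 * w - 3 ≠ 0 ∧ w ^ 2 + sq2 * w - 3 ≠ 0 ∧
  3 * w ^ 2 - sq2 * w - 1 ≠ 0 ∧ 3 * w ^ 2 + sq2 * w - 1 ≠ 0

lemma Umat_val : Umat.1 = !![Real.sqrt 2, -1; 1, 0] := by
  show (Smat.1 * Tmat.1) = _
  simp [Smat, Tmat, Matrix.mul_fin_two]

lemma U2_val : (Umat ^ 2).1 = !![1, -Real.sqrt 2; Real.sqrt 2, -1] := by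
  rw [pow_two, Matrix.SpecialLinearGroup.coe_mul, Umat_val, Matrix.mul_fin_two]
  norm_num [Real.mul_self_sqrt]

lemma U3_val : (Umat ^ 3).1 = !![0, -1; 1, -Real.sqrt 2] := by
  rw [pow_succ, Matrix.SpecialLinearGroup.coe_mul, U2_val, Umat_val, Matrix.mul_fin_two]
  norm_num [Real.mul_self_sqrt]

lemma key (k : ℕ) (d Q P : ℂ) (h : d ^ 2 * Q = P) :
    d ^ (-(2 * (k : ℤ))) * Q ^ (-(k : ℤ)) = P ^ (-(k : ℤ)) := by
  subst h
  rw [show -(2 * (k : ℤ)) = -((2 * k : ℕ) : ℤ) by push_cast; ring]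
  simp only [_root_.zpow_neg, zpow_natCast]
  rw [← mul_inv, mul_pow, pow_mul]

set_option maxHeartbeats 2000000 in
/-- For `k` an odd positive integer,
`q(z) = (z²-√2z-3)^{-k} + (z²+√2z-3)^{-k} + (3z²-√2z-1)^{-k} + (3z²+√2z-1)^{-k}`
satisfies the two rational period function relations of weight `2k` on `G₄`. -/
theorem rpf_example_G4_odd (k : ℕ) (hk : 1 ≤ k) (hodd : Odd k)
    (q : ℂ → ℂ)
    (hq : ∀ z, q z = (z ^ 2 - sq2 * z - 3) ^ (-(k : ℤ)) + (z ^ 2 + sq2 * z - 3) ^ (-(k : ℤ))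
        + (3 * z ^ 2 - sq2 * z - 1) ^ (-(k : ℤ)) + (3 * z ^ 2 + sq2 * z - 1) ^ (-(k : ℤ))) :
    (∀ z : ℂ, denom Tmat z ≠ 0 → QuadsNonzero z → QuadsNonzero (mobius Tmat z) →
      q z + slash k Tmat q z = 0) ∧
    (∀ z : ℂ,
      (∀ t < 4, denom (Umat ^ t) z ≠ 0 ∧ QuadsNonzero (mobius (Umat ^ t) z)) →
      q z + slash k Umat q z + slash k (Umat ^ 2) q z + slash k (Umat ^ 3) q z = 0) := by
  have s2 : sq2 ^ 2 = 2 := by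
    rw [sq2, ← Complex.ofReal_pow, Real.sq_sqrt] <;> norm_num
  have s3 : sq2 ^ 3 = 2 * sq2 := by rw [pow_succ, s2]
  have s4 : sq2 ^ 4 = 4 := by rw [pow_succ, s3, mul_assoc, ← pow_two, s2]; norm_num
  have s5 : sq2 ^ 5 = 4 * sq2 := by rw [pow_succ, s4]
  have s6 : sq2 ^ 6 = 8 := by rw [pow_succ, s5, mul_assoc, ← pow_two, s2]; norm_num
  have hneg : ∀ x : ℂ, (-x) ^ (-(k : ℤ)) = -(x ^ (-(k : ℤ))) := by
    intro x
    rw [_root_.zpow_neg, _root_.zpow_neg, zpow_natCast, zpow_natCast, hodd.neg_pow, inv_neg]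
  constructor
  · intro z hd _ _
    have hz : z ≠ 0 := by
      simpa [denom, Tmat] using hd
    have hden : denom Tmat z = z := by simp [denom, Tmat]
    have hmob : mobius Tmat z = -1 / z := by simp [mobius, Tmat]
    rw [slash, hden, hmob, hq, hq, mul_add, mul_add, mul_add]
    rw [key k (z) ((-1 / z) ^ 2 - sq2 * (-1 / z) - 3) (-(3 * z ^ 2 - sq2 * z - 1)) (by field_simp; all_goals ring_nf; all_goals simp only [s2, s3, s4, s5, s6]; all_goals ring),
        key k (z) ((-1 / z) ^ 2 + sq2 * (-1 / z) - 3) (-(3 * z ^ 2 + sq2 * z - 1)) (by field_simp; all_goals ring_nf; all_goals simp only [s2, s3, s4, s5, s6]; all_goals ring),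
        key k (z) (3 * (-1 / z) ^ 2 - sq2 * (-1 / z) - 1) (-(z ^ 2 - sq2 * z - 3)) (by field_simp; all_goals ring_nf; all_goals simp only [s2, s3, s4, s5, s6]; all_goals ring),
        key k (z) (3 * (-1 / z) ^ 2 + sq2 * (-1 / z) - 1) (-(z ^ 2 + sq2 * z - 3)) (by field_simp; all_goals ring_nf; all_goals simp only [s2, s3, s4, s5, s6]; all_goals ring)]
    rw [hneg, hneg, hneg, hneg]
    ring
  · intro z h
    have h1 := h 1 (by norm_num)
    have h2 := h 2 (by norm_num)
    have h3 := h 3 (by norm_num)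
    have hz : z ≠ 0 := by
      have := h1.1
      rw [pow_one, denom, Umat_val] at this
      simpa using this
    have hz2 : sq2 * z - 1 ≠ 0 := by
      have := h2.1
      rw [denom, U2_val] at this
      simpa [sq2, sub_eq_add_neg] using this
    have hz3 : z - sq2 ≠ 0 := by
      have := h3.1
      rw [denom, U3_val] at this
      simpa [sq2, sub_eq_add_neg] using this
    have hden1 : denom Umat z = z := by rw [denom, Umat_val]; simp
    have hmob1 : mobius Umat z = (sq2 * z - 1) / z := by
      rw [mobius, Umat_val]; simp [sq2]; ring_nf
    have hden2 : denom (Umat ^ 2) z = sq2 * z - 1 := by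
      rw [denom, U2_val]; simp [sq2]; ring
    have hmob2 : mobius (Umat ^ 2) z = (z - sq2) / (sq2 * z - 1) := by
      rw [mobius, U2_val]; simp [sq2]; ring_nf
    have hden3 : denom (Umat ^ 3) z = z - sq2 := by
      rw [denom, U3_val]; simp [sq2]; ring
    have hmob3 : mobius (Umat ^ 3) z = -1 / (z - sq2) := by
      rw [mobius, U3_val]; simp [sq2]; ring_nf
    rw [slash, slash, slash, hden1, hmob1, hden2, hmob2, hden3, hmob3, hq, hq, hq, hq,
        mul_add, mul_add, mul_add, mul_add, mul_add, mul_add, mul_add, mul_add, mul_add]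
    rw [key k (z) (((sq2 * z - 1) / z) ^ 2 - sq2 * ((sq2 * z - 1) / z) - 3) (-(3 * z ^ 2 + sq2 * z - 1)) (by field_simp; all_goals ring_nf; all_goals simp only [s2, s3, s4, s5, s6]; all_goals ring),
        key k (z) (((sq2 * z - 1) / z) ^ 2 + sq2 * ((sq2 * z - 1) / z) - 3) (z ^ 2 - 3 * sq2 * z + 1) (by field_simp; all_goals ring_nf; all_goals simp only [s2, s3, s4, s5, s6]; all_goals ring),
        key k (z) (3 * ((sq2 * z - 1) / z) ^ 2 - sq2 * ((sq2 * z - 1) / z) - 1) (3 * z ^ 2 - 5 * sq2 * z + 3) (by field_simp; all_goals ring_nf; all_goals simp only [s2, s3, s4, s5, s6]; all_goals ring),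
        key k (z) (3 * ((sq2 * z - 1) / z) ^ 2 + sq2 * ((sq2 * z - 1) / z) - 1) (7 * z ^ 2 - 7 * sq2 * z + 3) (by field_simp; all_goals ring_nf; all_goals simp only [s2, s3, s4, s5, s6]; all_goals ring),
        key k (sq2 * z - 1) (((z - sq2) / (sq2 * z - 1)) ^ 2 - sq2 * ((z - sq2) / (sq2 * z - 1)) - 3) (-(7 * z ^ 2 - 7 * sq2 * z + 3)) (by field_simp; all_goals ring_nf; all_goals simp only [s2, s3, s4, s5, s6]; all_goals ring),
        key k (sq2 * z - 1) (((z - sq2) / (sq2 * z - 1)) ^ 2 + sq2 * ((z - sq2) / (sq2 * z - 1)) - 3) (-(3 * z ^ 2 - sq2 * z - 1)) (by field_simp; all_goals ring_nf; all_goals simp only [s2, s3, s4, s5, s6]; all_goals ring),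
        key k (sq2 * z - 1) (3 * ((z - sq2) / (sq2 * z - 1)) ^ 2 - sq2 * ((z - sq2) / (sq2 * z - 1)) - 1) (-(z ^ 2 + sq2 * z - 3)) (by field_simp; all_goals ring_nf; all_goals simp only [s2, s3, s4, s5, s6]; all_goals ring),
        key k (sq2 * z - 1) (3 * ((z - sq2) / (sq2 * z - 1)) ^ 2 + sq2 * ((z - sq2) / (sq2 * z - 1)) - 1) (3 * z ^ 2 - 7 * sq2 * z + 7) (by field_simp; all_goals ring_nf; all_goals simp only [s2, s3, s4, s5, s6]; all_goals ring),
        key k (z - sq2) ((-1 / (z - sq2)) ^ 2 - sq2 * (-1 / (z - sq2)) - 3) (-(3 * z ^ 2 - 7 * sq2 * z + 7)) (by field_simp; all_goals ring_nf; all_goals simp only [s2, s3, s4, s5, s6]; all_goals ring),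
        key k (z - sq2) ((-1 / (z - sq2)) ^ 2 + sq2 * (-1 / (z - sq2)) - 3) (-(3 * z ^ 2 - 5 * sq2 * z + 3)) (by field_simp; all_goals ring_nf; all_goals simp only [s2, s3, s4, s5, s6]; all_goals ring),
        key k (z - sq2) (3 * (-1 / (z - sq2)) ^ 2 - sq2 * (-1 / (z - sq2)) - 1) (-(z ^ 2 - 3 * sq2 * z + 1)) (by field_simp; all_goals ring_nf; all_goals simp only [s2, s3, s4, s5, s6]; all_goals ring),
        key k (z - sq2) (3 * (-1 / (z - sq2)) ^ 2 + sq2 * (-1 / (z - sq2)) - 1) (-(z ^ 2 - sq2 * z - 3)) (by field_simp; all_goals ring_nf; all_goals simp only [s2, s3, s4, s5, s6]; all_goals ring)]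
    simp only [hneg]
    ring
end
end

section
/- Let p = 4, λ = √2, U = [[√2,−1],[1,0]], T = [[0,−1],[1,0]], and let k be ANY positive integer. Define q(z) = (z²−√2z−3)^{−k} + (z²+√2z−3)^{−k} − (−1)^k·[(3z²−√2z−1)^{−k} + (3z²+√2z−1)^{−k}]. Then q satisfies the two rational period function relations of weight 2k for the Hecke group G_4: q + q|T = 0 and q + q|U + q|U² + q|U³ = 0, at every z ∈ ℂ where all terms are defined. That is, q is a rational period function of weight 2k on G_4. -/
open Matrix

noncomputable section

/-- For ANY positive integer `k`,
`q(z) = (z²-√2z-3)^{-k} + (z²+√2z-3)^{-k} - (-1)^k[(3z²-√2z-1)^{-k} + (3z²+√2z-1)^{-k}]`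
satisfies the two rational period function relations of weight `2k` on `G₄`. -/
theorem rpf_example_G4_any_k (k : ℕ) (hk : 1 ≤ k)
    (q : ℂ → ℂ)
    (hq : ∀ z, q z = (z ^ 2 - sq2 * z - 3) ^ (-(k : ℤ)) + (z ^ 2 + sq2 * z - 3) ^ (-(k : ℤ))
        - (-1) ^ k * ((3 * z ^ 2 - sq2 * z - 1) ^ (-(k : ℤ))
            + (3 * z ^ 2 + sq2 * z - 1) ^ (-(k : ℤ)))) :
    (∀ z : ℂ, denom Tmat z ≠ 0 → QuadsNonzero z → QuadsNonzero (mobius Tmat z) →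
      q z + slash k Tmat q z = 0) ∧
    (∀ z : ℂ,
      (∀ t < 4, denom (Umat ^ t) z ≠ 0 ∧ QuadsNonzero (mobius (Umat ^ t) z)) →
      q z + slash k Umat q z + slash k (Umat ^ 2) q z + slash k (Umat ^ 3) q z = 0) := by
  have hs : sq2 ^ 2 = 2 := by
    simp only [sq2, ← Complex.ofReal_pow]
    rw [Real.sq_sqrt (by norm_num : (0:ℝ) ≤ 2)]
    norm_num
  set e := ((-1 : ℂ)) ^ k with hedef
  have he : e * e = 1 := by
    rw [hedef, ← pow_add, ← two_mul, pow_mul]; norm_num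
  have core : ∀ E N d : ℂ, d ≠ 0 → E = N / d ^ 2 →
      d ^ (-(2 * (k : ℤ))) * E ^ (-(k : ℤ)) = N ^ (-(k : ℤ)) := by
    intro E N d hd hE
    have h2 : (d ^ 2 : ℂ) ^ (-(k : ℤ)) = d ^ (-(2 * (k : ℤ))) := by
      rw [← zpow_natCast d 2, ← _root_.zpow_mul]
      congr 1; push_cast; ring
    have hne : d ^ (-(2 * (k : ℤ))) ≠ 0 := zpow_ne_zero _ hd
    rw [hE, div_zpow, h2, ← mul_div_assoc, mul_comm, mul_div_assoc, div_self hne, mul_one]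
  have coreNeg : ∀ E N d : ℂ, d ≠ 0 → E = -N / d ^ 2 →
      d ^ (-(2 * (k : ℤ))) * E ^ (-(k : ℤ)) = e * N ^ (-(k : ℤ)) := by
    intro E N d hd hE
    rw [core E (-N) d hd hE, show (-N) = (-1 : ℂ) * N from by ring, mul_zpow]
    congr 1
    rw [_root_.zpow_neg, zpow_natCast, ← inv_pow, inv_neg, inv_one]
  have exp1 : ∀ n d : ℂ, d ≠ 0 →
      (n / d) ^ 2 - sq2 * (n / d) - 3 = (n ^ 2 - sq2 * (n * d) - 3 * d ^ 2) / d ^ 2 := by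
    intro n d hd; field_simp
  have exp2 : ∀ n d : ℂ, d ≠ 0 →
      (n / d) ^ 2 + sq2 * (n / d) - 3 = (n ^ 2 + sq2 * (n * d) - 3 * d ^ 2) / d ^ 2 := by
    intro n d hd; field_simp
  have exp3 : ∀ n d : ℂ, d ≠ 0 →
      3 * (n / d) ^ 2 - sq2 * (n / d) - 1 = (3 * n ^ 2 - sq2 * (n * d) - d ^ 2) / d ^ 2 := by
    intro n d hd; field_simp
  have exp4 : ∀ n d : ℂ, d ≠ 0 →
      3 * (n / d) ^ 2 + sq2 * (n / d) - 1 = (3 * n ^ 2 + sq2 * (n * d) - d ^ 2) / d ^ 2 := by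
    intro n d hd; field_simp
  have hTc : Tmat.1 = !![0, -1; 1, 0] := rfl
  have hUc : Umat.1 = !![Real.sqrt 2, -1; 1, 0] := by
    show (Smat * Tmat).1 = _
    rw [Matrix.SpecialLinearGroup.coe_mul]
    show (!![1, Real.sqrt 2; 0, 1] : Matrix (Fin 2) (Fin 2) ℝ) * !![0, -1; 1, 0] = _
    rw [Matrix.mul_fin_two]; norm_num
  have hr2 : Real.sqrt 2 * Real.sqrt 2 = 2 := Real.mul_self_sqrt (by norm_num)
  have hU2c : (Umat ^ 2).1 = !![1, -Real.sqrt 2; Real.sqrt 2, -1] := by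
    rw [pow_two, Matrix.SpecialLinearGroup.coe_mul, hUc, Matrix.mul_fin_two]
    norm_num [hr2]
  have hU3c : (Umat ^ 3).1 = !![0, -1; 1, -Real.sqrt 2] := by
    rw [pow_succ, Matrix.SpecialLinearGroup.coe_mul, hU2c, hUc, Matrix.mul_fin_two]
    norm_num [hr2]
  constructor
  · intro z hdz _ _
    have hdT : denom Tmat z = z := by simp [denom, hTc]
    have hz : z ≠ 0 := by rwa [hdT] at hdz
    have hmT : mobius Tmat z = (-1) / z := by
      simp [mobius, hTc]
    rw [hq z]
    simp only [slash]
    rw [hq (mobius Tmat z), hmT, hdT]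
    have hT0 : ((z) : ℂ) ^ (-(2 * (k : ℤ))) * (((-1) / (z)) ^ 2 - sq2 * ((-1) / (z)) - 3) ^ (-(k : ℤ)) = e * (3 * z ^ 2 - sq2 * z - 1) ^ (-(k : ℤ)) := by
      refine coreNeg _ _ _ hz ?_
      rw [exp1 ((-1)) (z) hz]
      congr 1
      ring
    have hT1 : ((z) : ℂ) ^ (-(2 * (k : ℤ))) * (((-1) / (z)) ^ 2 + sq2 * ((-1) / (z)) - 3) ^ (-(k : ℤ)) = e * (3 * z ^ 2 + sq2 * z - 1) ^ (-(k : ℤ)) := by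
      refine coreNeg _ _ _ hz ?_
      rw [exp2 ((-1)) (z) hz]
      congr 1
      ring
    have hT2 : ((z) : ℂ) ^ (-(2 * (k : ℤ))) * (3 * ((-1) / (z)) ^ 2 - sq2 * ((-1) / (z)) - 1) ^ (-(k : ℤ)) = e * (z ^ 2 - sq2 * z - 3) ^ (-(k : ℤ)) := by
      refine coreNeg _ _ _ hz ?_
      rw [exp3 ((-1)) (z) hz]
      congr 1
      ring
    have hT3 : ((z) : ℂ) ^ (-(2 * (k : ℤ))) * (3 * ((-1) / (z)) ^ 2 + sq2 * ((-1) / (z)) - 1) ^ (-(k : ℤ)) = e * (z ^ 2 + sq2 * z - 3) ^ (-(k : ℤ)) := by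
      refine coreNeg _ _ _ hz ?_
      rw [exp4 ((-1)) (z) hz]
      congr 1
      ring
    linear_combination hT0 + hT1 - e * hT2 - e * hT3
      - ((z ^ 2 - sq2 * z - 3) ^ (-(k : ℤ)) + (z ^ 2 + sq2 * z - 3) ^ (-(k : ℤ))) * he
  · intro z h
    have hdU1 : denom Umat z = z := by simp [denom, hUc]
    have hdU2 : denom (Umat ^ 2) z = sq2 * z - 1 := by
      simp [denom, hU2c, sq2]; ring
    have hdU3 : denom (Umat ^ 3) z = z - sq2 := by
      simp [denom, hU3c, sq2]; ring
    have hz : z ≠ 0 := by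
      have h1 := (h 1 (by norm_num)).1
      rw [pow_one, hdU1] at h1; exact h1
    have hd2 : sq2 * z - 1 ≠ 0 := by
      have h1 := (h 2 (by norm_num)).1
      rwa [hdU2] at h1
    have hd3 : z - sq2 ≠ 0 := by
      have h1 := (h 3 (by norm_num)).1
      rwa [hdU3] at h1
    have hm1 : mobius Umat z = (sq2 * z - 1) / z := by
      simp [mobius, hUc, sq2]; ring_nf
    have hm2 : mobius (Umat ^ 2) z = (z - sq2) / (sq2 * z - 1) := by
      simp [mobius, hU2c, sq2]; ring_nf
    have hm3 : mobius (Umat ^ 3) z = (-1) / (z - sq2) := by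
      simp [mobius, hU3c, sq2]; ring_nf
    rw [hq z]
    simp only [slash]
    rw [hq (mobius Umat z), hq (mobius (Umat ^ 2) z), hq (mobius (Umat ^ 3) z)]
    rw [hm1, hm2, hm3, hdU1, hdU2, hdU3]
    have hU10 : ((z) : ℂ) ^ (-(2 * (k : ℤ))) * (((sq2 * z - 1) / z) ^ 2 - sq2 * ((sq2 * z - 1) / z) - 3) ^ (-(k : ℤ)) = e * (3 * z ^ 2 + sq2 * z - 1) ^ (-(k : ℤ)) := by
      refine coreNeg _ _ _ hz ?_
      rw [exp1 (sq2 * z - 1) (z) hz]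
      congr 1
      ring
    have hU11 : ((z) : ℂ) ^ (-(2 * (k : ℤ))) * (((sq2 * z - 1) / z) ^ 2 + sq2 * ((sq2 * z - 1) / z) - 3) ^ (-(k : ℤ)) = (z ^ 2 - 3 * sq2 * z + 1) ^ (-(k : ℤ)) := by
      refine core _ _ _ hz ?_
      rw [exp2 (sq2 * z - 1) (z) hz]
      congr 1
      linear_combination (2 * z ^ 2) * hs
    have hU12 : ((z) : ℂ) ^ (-(2 * (k : ℤ))) * (3 * ((sq2 * z - 1) / z) ^ 2 - sq2 * ((sq2 * z - 1) / z) - 1) ^ (-(k : ℤ)) = (3 * z ^ 2 - 5 * sq2 * z + 3) ^ (-(k : ℤ)) := by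
      refine core _ _ _ hz ?_
      rw [exp3 (sq2 * z - 1) (z) hz]
      congr 1
      linear_combination (2 * z ^ 2) * hs
    have hU13 : ((z) : ℂ) ^ (-(2 * (k : ℤ))) * (3 * ((sq2 * z - 1) / z) ^ 2 + sq2 * ((sq2 * z - 1) / z) - 1) ^ (-(k : ℤ)) = (7 * z ^ 2 - 7 * sq2 * z + 3) ^ (-(k : ℤ)) := by
      refine core _ _ _ hz ?_
      rw [exp4 (sq2 * z - 1) (z) hz]
      congr 1
      linear_combination (4 * z ^ 2) * hs
    have hU20 : ((sq2 * z - 1) : ℂ) ^ (-(2 * (k : ℤ))) * (((z - sq2) / (sq2 * z - 1)) ^ 2 - sq2 * ((z - sq2) / (sq2 * z - 1)) - 3) ^ (-(k : ℤ)) = e * (7 * z ^ 2 - 7 * sq2 * z + 3) ^ (-(k : ℤ)) := by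
      refine coreNeg _ _ _ hd2 ?_
      rw [exp1 (z - sq2) (sq2 * z - 1) hd2]
      congr 1
      linear_combination (sq2 * z - 4 * z ^ 2) * hs
    have hU21 : ((sq2 * z - 1) : ℂ) ^ (-(2 * (k : ℤ))) * (((z - sq2) / (sq2 * z - 1)) ^ 2 + sq2 * ((z - sq2) / (sq2 * z - 1)) - 3) ^ (-(k : ℤ)) = e * (3 * z ^ 2 - sq2 * z - 1) ^ (-(k : ℤ)) := by
      refine coreNeg _ _ _ hd2 ?_
      rw [exp2 (z - sq2) (sq2 * z - 1) hd2]
      congr 1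
      linear_combination (2 - sq2 * z - 2 * z ^ 2) * hs
    have hU22 : ((sq2 * z - 1) : ℂ) ^ (-(2 * (k : ℤ))) * (3 * ((z - sq2) / (sq2 * z - 1)) ^ 2 - sq2 * ((z - sq2) / (sq2 * z - 1)) - 1) ^ (-(k : ℤ)) = e * (z ^ 2 + sq2 * z - 3) ^ (-(k : ℤ)) := by
      refine coreNeg _ _ _ hd2 ?_
      rw [exp3 (z - sq2) (sq2 * z - 1) hd2]
      congr 1
      linear_combination (2 + sq2 * z - 2 * z ^ 2) * hs
    have hU23 : ((sq2 * z - 1) : ℂ) ^ (-(2 * (k : ℤ))) * (3 * ((z - sq2) / (sq2 * z - 1)) ^ 2 + sq2 * ((z - sq2) / (sq2 * z - 1)) - 1) ^ (-(k : ℤ)) = (3 * z ^ 2 - 7 * sq2 * z + 7) ^ (-(k : ℤ)) := by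
      refine core _ _ _ hd2 ?_
      rw [exp4 (z - sq2) (sq2 * z - 1) hd2]
      congr 1
      linear_combination (4 - sq2 * z) * hs
    have hU30 : ((z - sq2) : ℂ) ^ (-(2 * (k : ℤ))) * (((-1) / (z - sq2)) ^ 2 - sq2 * ((-1) / (z - sq2)) - 3) ^ (-(k : ℤ)) = e * (3 * z ^ 2 - 7 * sq2 * z + 7) ^ (-(k : ℤ)) := by
      refine coreNeg _ _ _ hd3 ?_
      rw [exp1 ((-1)) (z - sq2) hd3]
      congr 1
      linear_combination (-4) * hs
    have hU31 : ((z - sq2) : ℂ) ^ (-(2 * (k : ℤ))) * (((-1) / (z - sq2)) ^ 2 + sq2 * ((-1) / (z - sq2)) - 3) ^ (-(k : ℤ)) = e * (3 * z ^ 2 - 5 * sq2 * z + 3) ^ (-(k : ℤ)) := by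
      refine coreNeg _ _ _ hd3 ?_
      rw [exp2 ((-1)) (z - sq2) hd3]
      congr 1
      linear_combination (-2) * hs
    have hU32 : ((z - sq2) : ℂ) ^ (-(2 * (k : ℤ))) * (3 * ((-1) / (z - sq2)) ^ 2 - sq2 * ((-1) / (z - sq2)) - 1) ^ (-(k : ℤ)) = e * (z ^ 2 - 3 * sq2 * z + 1) ^ (-(k : ℤ)) := by
      refine coreNeg _ _ _ hd3 ?_
      rw [exp3 ((-1)) (z - sq2) hd3]
      congr 1
      linear_combination (-2) * hs
    have hU33 : ((z - sq2) : ℂ) ^ (-(2 * (k : ℤ))) * (3 * ((-1) / (z - sq2)) ^ 2 + sq2 * ((-1) / (z - sq2)) - 1) ^ (-(k : ℤ)) = e * (z ^ 2 - sq2 * z - 3) ^ (-(k : ℤ)) := by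
      refine coreNeg _ _ _ hd3 ?_
      rw [exp4 ((-1)) (z - sq2) hd3]
      congr 1
      ring
    linear_combination hU10 + hU11 - e * hU12 - e * hU13
      + hU20 + hU21 - e * hU22 - e * hU23
      + hU30 + hU31 - e * hU32 - e * hU33
      - ((z ^ 2 - sq2 * z - 3) ^ (-(k : ℤ)) + (z ^ 2 + sq2 * z - 3) ^ (-(k : ℤ))
          + (z ^ 2 - 3 * sq2 * z + 1) ^ (-(k : ℤ))) * he
end
end
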